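/- q-norm expansion of swap walks: if X is a (q,γ)-product d-partite complex, then for all disjoint coordinate subsets S, T ⊆ [d], the swap walk satisfies ‖A_{S,T} − Π_{S,T}‖_{q→q} ≤ |S||T|γ and ‖A_{S,T} − Π_{S,T}‖_{q'→q'} ≤ |S||T|γ, where q' = q/(q−1). -/

import Mathlib

/-!
Write `E_T` for the conditional expectation given `x_T`. Peeling a colour `j` off `T`,
`E_T f - E f = (E_T f - E_{T∖j} f) + (E_{T∖j} f - E f)`, and on the link of each `x_{T∖j}` the
first term is the swap walk from `S` to `{j}` of that link. Minkowski's inequality and averaging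
over the links make the constants add up, so `|T|` times the bound for a single colour suffices.
The walk from `S` to `{j}` is the adjoint of the walk from `{j}` to `S`, which is handled in the
same way from the pair walks `{j} → {i}` of the `(q,γ)`-product hypothesis. Adjoints exchange the
`q`- and `q'`-norms by Hölder duality, so both exponents are proved together.
-/

open Finset BigOperators

/-- Conditional expectation operator `E_T` on a `d`-partite space:
`E_T f (x) = E[f(y) | y_T = x_T]` under the (finitely supported) measure `μ`. -/
noncomputable def projE {d : ℕ} {Ω : Type} [Fintype Ω] [DecidableEq Ω]
    (μ : (Fin d → Ω) → ℝ) (T : Finset (Fin d))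
    (f : (Fin d → Ω) → ℝ) (x : Fin d → Ω) : ℝ :=
  (∑ y : Fin d → Ω, if ∀ i ∈ T, y i = x i then μ y * f y else 0) /
  (∑ y : Fin d → Ω, if ∀ i ∈ T, y i = x i then μ y else 0)

/-- Efron–Stein component `f^{=S} = ∑_{T ⊆ S} (-1)^{|S|-|T|} E_T f`. -/
noncomputable def esComp {d : ℕ} {Ω : Type} [Fintype Ω] [DecidableEq Ω]
    (μ : (Fin d → Ω) → ℝ) (S : Finset (Fin d))
    (f : (Fin d → Ω) → ℝ) : (Fin d → Ω) → ℝ :=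
  fun x => ∑ T ∈ S.powerset, (-1 : ℝ) ^ (S.card - T.card) * projE μ T f x

/-- `L^q` norm with respect to the probability mass function `μ`. -/
noncomputable def pnorm {α : Type} [Fintype α] (μ : α → ℝ) (q : ℝ) (f : α → ℝ) : ℝ :=
  (∑ x, μ x * |f x| ^ q) ^ (1 / q)

/-- Conditional (link) measure obtained from `μ` by conditioning the coordinates
in `R` to agree with `z`. -/
noncomputable def condMeasure {d : ℕ} {Ω : Type} [Fintype Ω] [DecidableEq Ω]
    (μ : (Fin d → Ω) → ℝ) (R : Finset (Fin d)) (z : Fin d → Ω) :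
    (Fin d → Ω) → ℝ :=
  fun y => (if ∀ i ∈ R, y i = z i then μ y else 0) /
    (∑ y' : Fin d → Ω, if ∀ i ∈ R, y' i = z i then μ y' else 0)

/-- Expectation with respect to the mass function `μ`. -/
noncomputable def expect {α : Type} [Fintype α] (μ : α → ℝ) (f : α → ℝ) : ℝ :=
  ∑ x, μ x * f x

/-- `X` is a `(q,γ)`-product: in every link of codimension at least `2`
(conditioning the coordinates in `R` on `z`), for every pair of distinct colors
`i, j ∉ R`, the bipartite walk from color `i` to color `j` is a `q`-norm
expander: `‖A^τ_{i,j} g − Π^τ_{i,j} g‖_q ≤ γ ‖g‖_q` for every function `g` of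
the `i`-th coordinate. -/
def IsQGammaProduct {d : ℕ} {Ω : Type} [Fintype Ω] [DecidableEq Ω]
    (μ : (Fin d → Ω) → ℝ) (q γ : ℝ) : Prop :=
  ∀ (R : Finset (Fin d)) (z : Fin d → Ω), R.card + 2 ≤ d →
    ∀ i j : Fin d, i ∉ R → j ∉ R → i ≠ j →
      ∀ g : (Fin d → Ω) → ℝ, (∀ x y, x i = y i → g x = g y) →
        pnorm (condMeasure μ R z) q
            (fun x => projE (condMeasure μ R z) {j} g x - expect (condMeasure μ R z) g)
          ≤ γ * pnorm (condMeasure μ R z) q g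

section WeightedLp

variable {α : Type} [Fintype α] {ν : α → ℝ}

lemma sum_mul_abs_rpow_nonneg (hν : ∀ x, 0 ≤ ν x) (r : ℝ) (f : α → ℝ) :
    0 ≤ ∑ x, ν x * |f x| ^ r :=
  Finset.sum_nonneg fun x _ => mul_nonneg (hν x) (Real.rpow_nonneg (abs_nonneg _) _)

lemma pnorm_nonneg (hν : ∀ x, 0 ≤ ν x) (r : ℝ) (f : α → ℝ) : 0 ≤ pnorm ν r f :=
  Real.rpow_nonneg (sum_mul_abs_rpow_nonneg hν r f) _

lemma pnorm_rpow (hν : ∀ x, 0 ≤ ν x) {r : ℝ} (hr : r ≠ 0) (f : α → ℝ) :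
    pnorm ν r f ^ r = ∑ x, ν x * |f x| ^ r := by
  rw [pnorm, ← Real.rpow_mul (sum_mul_abs_rpow_nonneg hν r f), one_div, inv_mul_cancel₀ hr,
    Real.rpow_one]

lemma pnorm_congr {r : ℝ} {f g : α → ℝ} (h : ∀ x, ν x ≠ 0 → f x = g x) :
    pnorm ν r f = pnorm ν r g := by
  refine congrArg (· ^ (1 / r)) (Finset.sum_congr rfl fun x _ => ?_)
  by_cases hx : ν x = 0
  · simp [hx]
  · rw [h x hx]

lemma pnorm_zero_measure {r : ℝ} (hr : r ≠ 0) (f : α → ℝ) : pnorm (fun _ => 0) r f = 0 := by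
  simp [pnorm, hr]

lemma abs_rpow_one_div_mul_rpow {w : ℝ} (hw : 0 ≤ w) {r : ℝ} (hr : r ≠ 0) (c : ℝ) :
    |w ^ (1 / r) * c| ^ r = w * |c| ^ r := by
  rw [abs_mul, abs_of_nonneg (Real.rpow_nonneg hw _), Real.mul_rpow (Real.rpow_nonneg hw _)
    (abs_nonneg _), ← Real.rpow_mul hw, one_div, inv_mul_cancel₀ hr, Real.rpow_one]

/-- Hölder's inequality, from the unweighted one applied to `ν ^ (1/p) * a` and
`ν ^ (1/p') * b`. -/
lemma abs_expect_mul_le (hν : ∀ x, 0 ≤ ν x) {p p' : ℝ} (hpq : p.HolderConjugate p')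
    (a b : α → ℝ) :
    |expect ν (fun x => a x * b x)| ≤ pnorm ν p a * pnorm ν p' b := by
  have hsplit : ∀ x, ν x = ν x ^ (1 / p) * ν x ^ (1 / p') := fun x => by
    rw [← Real.rpow_add' (hν x) (by simp [hpq.inv_add_inv_eq_one]), one_div, one_div,
      hpq.inv_add_inv_eq_one, Real.rpow_one]
  calc |expect ν (fun x => a x * b x)|
      ≤ ∑ x, ν x ^ (1 / p) * |a x| * (ν x ^ (1 / p') * |b x|) := by
        refine (Finset.abs_sum_le_sum_abs _ _).trans_eq (Finset.sum_congr rfl fun x _ => ?_)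
        rw [abs_mul, abs_mul, abs_of_nonneg (hν x)]
        nth_rewrite 1 [hsplit x]
        ring
    _ ≤ pnorm ν p a * pnorm ν p' b := by
        have := Real.inner_le_Lp_mul_Lq Finset.univ (fun x => ν x ^ (1 / p) * |a x|)
          (fun x => ν x ^ (1 / p') * |b x|) hpq
        simp only [abs_rpow_one_div_mul_rpow (hν _) hpq.ne_zero,
          abs_rpow_one_div_mul_rpow (hν _) hpq.symm.ne_zero, abs_abs] at this
        exact this

lemma pnorm_add_le (hν : ∀ x, 0 ≤ ν x) {p : ℝ} (hp : 1 ≤ p) (a b : α → ℝ) :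
    pnorm ν p (fun x => a x + b x) ≤ pnorm ν p a + pnorm ν p b := by
  have := Real.Lp_add_le Finset.univ (fun x => ν x ^ (1 / p) * a x)
    (fun x => ν x ^ (1 / p) * b x) hp
  simp only [← mul_add, abs_rpow_one_div_mul_rpow (hν _) (by positivity : p ≠ 0)] at this
  exact this

end WeightedLp

section HolderDual

variable {α : Type}

/-- The extremiser of Hölder's inequality against `h`. -/
noncomputable def holderDual (p' : ℝ) (h : α → ℝ) : α → ℝ :=
  fun x => Real.sign (h x) * |h x| ^ (p' - 1)

lemma holderDual_mul_self {p' : ℝ} (hp' : p' ≠ 0) (h : α → ℝ) (x : α) :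
    holderDual p' h x * h x = |h x| ^ p' := by
  rcases lt_trichotomy (h x) 0 with hx | hx | hx
  · rw [holderDual, Real.sign_of_neg hx, abs_of_neg hx, Real.rpow_sub_one (by linarith)]
    field_simp
    exact mul_div_cancel_left₀ _ hx.ne
  · simp [holderDual, hx, Real.zero_rpow hp']
  · rw [holderDual, Real.sign_of_pos hx, abs_of_pos hx, Real.rpow_sub_one hx.ne']
    field_simp

lemma abs_holderDual_rpow {p p' : ℝ} (hpq : p.HolderConjugate p') (h : α → ℝ) (x : α) :
    |holderDual p' h x| ^ p = |h x| ^ p' := by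
  have hsign : |Real.sign (h x)| = if h x = 0 then 0 else 1 := by
    rcases lt_trichotomy (h x) 0 with hx | hx | hx
    · simp [Real.sign_of_neg hx, hx.ne]
    · simp [hx]
    · simp [Real.sign_of_pos hx, hx.ne']
  rw [holderDual, abs_mul, hsign, abs_of_nonneg (Real.rpow_nonneg (abs_nonneg _) _)]
  split_ifs with hx
  · simp [hx, Real.zero_rpow hpq.ne_zero, Real.zero_rpow hpq.symm.ne_zero]
  · rw [one_mul, ← Real.rpow_mul (abs_nonneg _), hpq.symm.sub_one_mul_conj]

lemma pnorm_le_of_expect_holderDual_mul_le [Fintype α] {ν : α → ℝ} (hν : ∀ x, 0 ≤ ν x) {p p' : ℝ}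
    (hpq : p.HolderConjugate p') {h : α → ℝ} {M : ℝ} (hM : 0 ≤ M)
    (H : expect ν (fun x => holderDual p' h x * h x) ≤ M * pnorm ν p (holderDual p' h)) :
    pnorm ν p' h ≤ M := by
  set A := ∑ x, ν x * |h x| ^ p'
  have hA : 0 ≤ A := sum_mul_abs_rpow_nonneg hν p' h
  have hexpect : expect ν (fun x => holderDual p' h x * h x) = A := by
    simp only [_root_.expect, holderDual_mul_self hpq.symm.ne_zero, A]
  have hpnorm : pnorm ν p (holderDual p' h) = A ^ (1 / p) := by
    simp only [pnorm, abs_holderDual_rpow hpq, A]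
  rw [hexpect, hpnorm] at H
  change A ^ (1 / p') ≤ M
  rcases hA.eq_or_lt with hA0 | hApos
  · rwa [← hA0, Real.zero_rpow hpq.symm.one_div_ne_zero]
  · have hApow : 0 < A ^ (1 / p) := Real.rpow_pos_of_pos hApos _
    refine le_of_mul_le_mul_left ?_ hApow
    rw [← Real.rpow_add hApos, hpq.one_div_add_one_div, one_div_one, Real.rpow_one, mul_comm]
    exact H

end HolderDual

section Conditioning

variable {d : ℕ} {Ω : Type} {R T : Finset (Fin d)}

lemma forall_mem_eq_congr {x x' : Fin d → Ω} (h : ∀ i ∈ T, x i = x' i) (y : Fin d → Ω) :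
    (∀ i ∈ T, y i = x i) ↔ ∀ i ∈ T, y i = x' i :=
  forall₂_congr fun i hi => by rw [h i hi]

variable [Fintype Ω] [DecidableEq Ω] {ν : (Fin d → Ω) → ℝ}

noncomputable def linkMass (ν : (Fin d → Ω) → ℝ) (T : Finset (Fin d)) (x : Fin d → Ω) : ℝ :=
  ∑ y, if ∀ i ∈ T, y i = x i then ν y else 0

lemma condMeasure_apply (ν : (Fin d → Ω) → ℝ) (T : Finset (Fin d)) (x y : Fin d → Ω) :
    condMeasure ν T x y = (if ∀ i ∈ T, y i = x i then ν y else 0) / linkMass ν T x :=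
  rfl

lemma linkMass_congr {x x' : Fin d → Ω} (h : ∀ i ∈ T, x i = x' i) :
    linkMass ν T x = linkMass ν T x' :=
  Finset.sum_congr rfl fun y _ => if_congr (forall_mem_eq_congr h y) rfl rfl

lemma condMeasure_congr {x x' : Fin d → Ω} (h : ∀ i ∈ T, x i = x' i) :
    condMeasure ν T x = condMeasure ν T x' := by
  funext y
  rw [condMeasure_apply, condMeasure_apply, linkMass_congr h,
    if_congr (forall_mem_eq_congr h y) rfl rfl]

lemma le_linkMass (hν : ∀ x, 0 ≤ ν x) (T : Finset (Fin d)) (x : Fin d → Ω) :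
    ν x ≤ linkMass ν T x := by
  have := Finset.single_le_sum (f := fun y => if ∀ i ∈ T, y i = x i then ν y else 0)
    (fun y _ => ite_nonneg (hν y) le_rfl) (Finset.mem_univ x)
  simpa [linkMass] using this

lemma linkMass_nonneg (hν : ∀ x, 0 ≤ ν x) (T : Finset (Fin d)) (x : Fin d → Ω) :
    0 ≤ linkMass ν T x :=
  Finset.sum_nonneg fun y _ => ite_nonneg (hν y) le_rfl

lemma eq_zero_of_linkMass_eq_zero (hν : ∀ x, 0 ≤ ν x) {x y : Fin d → Ω}
    (h : linkMass ν T x = 0) (hy : ∀ i ∈ T, y i = x i) : ν y = 0 := by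
  refine le_antisymm ?_ (hν y)
  rw [← h, ← linkMass_congr hy]
  exact le_linkMass hν T y

lemma condMeasure_nonneg (hν : ∀ x, 0 ≤ ν x) (T : Finset (Fin d)) (x y : Fin d → Ω) :
    0 ≤ condMeasure ν T x y :=
  div_nonneg (ite_nonneg (hν y) le_rfl) (linkMass_nonneg hν T x)

lemma sum_condMeasure {x : Fin d → Ω} (h : linkMass ν T x ≠ 0) :
    ∑ y, condMeasure ν T x y = 1 := by
  simp only [condMeasure_apply, ← Finset.sum_div]
  exact div_self h

lemma condMeasure_of_linkMass_eq_zero {x : Fin d → Ω} (h : linkMass ν T x = 0) :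
    condMeasure ν T x = fun _ => 0 := by
  funext y
  rw [condMeasure_apply, h, div_zero]

lemma condMeasure_empty (hν : ∑ x, ν x = 1) (x : Fin d → Ω) : condMeasure ν ∅ x = ν := by
  funext y
  simp [condMeasure_apply, linkMass, hν]

lemma agree_of_condMeasure_ne_zero {x y : Fin d → Ω} (h : condMeasure ν T x y ≠ 0) :
    ∀ i ∈ T, y i = x i := by
  by_contra hy
  exact h (by rw [condMeasure_apply, if_neg hy, zero_div])

lemma projE_eq_expect_condMeasure (ν : (Fin d → Ω) → ℝ) (T : Finset (Fin d))
    (f : (Fin d → Ω) → ℝ) (x : Fin d → Ω) :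
    projE ν T f x = expect (condMeasure ν T x) f := by
  simp only [projE, _root_.expect, condMeasure_apply, linkMass, Finset.sum_div]
  refine Finset.sum_congr rfl fun y _ => ?_
  split_ifs <;> simp [div_mul_eq_mul_div]

lemma projE_empty (hν : ∑ x, ν x = 1) (f : (Fin d → Ω) → ℝ) (x : Fin d → Ω) :
    projE ν ∅ f x = expect ν f := by
  rw [projE_eq_expect_condMeasure, condMeasure_empty hν]

/-- A link of a link is a link. -/
lemma condMeasure_condMeasure (hν : ∀ x, 0 ≤ ν x) (hRT : Disjoint R T) (z x : Fin d → Ω) :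
    condMeasure (condMeasure ν R z) T x = condMeasure ν (R ∪ T) (T.piecewise x z) := by
  have hagree : ∀ w : Fin d → Ω,
      (∀ i ∈ R ∪ T, w i = T.piecewise x z i) ↔ (∀ i ∈ T, w i = x i) ∧ ∀ i ∈ R, w i = z i := by
    intro w
    rw [Finset.forall_mem_union, and_comm]
    refine and_congr (forall₂_congr fun i hi => ?_) (forall₂_congr fun i hi => ?_)
    · rw [Finset.piecewise_eq_of_mem _ _ _ hi]
    · rw [Finset.piecewise_eq_of_notMem _ _ _ (Finset.disjoint_left.1 hRT hi)]
  have hnum : ∀ w : Fin d → Ω, (if ∀ i ∈ T, w i = x i then condMeasure ν R z w else 0)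
      = (if ∀ i ∈ R ∪ T, w i = T.piecewise x z i then ν w else 0) / linkMass ν R z := by
    intro w
    rw [condMeasure_apply]
    by_cases hT : ∀ i ∈ T, w i = x i
    · by_cases hR : ∀ i ∈ R, w i = z i
      · rw [if_pos hT, if_pos hR, if_pos ((hagree w).2 ⟨hT, hR⟩)]
      · rw [if_pos hT, if_neg hR, if_neg fun h => hR ((hagree w).1 h).2, zero_div]
    · rw [if_neg hT, if_neg fun h => hT ((hagree w).1 h).1, zero_div]
  have hmass : linkMass (condMeasure ν R z) T x
      = linkMass ν (R ∪ T) (T.piecewise x z) / linkMass ν R z := by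
    simp only [linkMass, hnum, Finset.sum_div]
  funext y
  rw [condMeasure_apply, hnum, hmass, condMeasure_apply]
  by_cases hZ : linkMass ν R z = 0
  · have hy : (if ∀ i ∈ R ∪ T, y i = T.piecewise x z i then ν y else 0) = 0 := by
      split_ifs with hy
      exacts [eq_zero_of_linkMass_eq_zero hν hZ ((hagree y).1 hy).2, rfl]
    rw [hy, zero_div, zero_div, zero_div]
  · exact div_div_div_cancel_right₀ hZ _ _

lemma projE_insert (hν : ∀ x, 0 ≤ ν x) {j : Fin d} (hj : j ∉ T) (f : (Fin d → Ω) → ℝ)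
    (x : Fin d → Ω) : projE ν (insert j T) f x = projE (condMeasure ν T x) {j} f x := by
  rw [projE_eq_expect_condMeasure, projE_eq_expect_condMeasure,
    condMeasure_condMeasure hν (Finset.disjoint_singleton_right.2 hj), Finset.piecewise_same,
    Finset.union_comm, ← Finset.insert_eq]

lemma dependsOn_projE (ν : (Fin d → Ω) → ℝ) (T : Finset (Fin d)) (f : (Fin d → Ω) → ℝ) :
    DependsOn (projE ν T f) T := fun x y h => by
  rw [projE_eq_expect_condMeasure, projE_eq_expect_condMeasure, condMeasure_congr h]

end Conditioning

section Tower

variable {d : ℕ} {Ω : Type} [Fintype Ω] [DecidableEq Ω] {ν : (Fin d → Ω) → ℝ}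
  {S T : Finset (Fin d)}

lemma sum_mul_condMeasure (hν : ∀ x, 0 ≤ ν x) {f : (Fin d → Ω) → ℝ} (hf : DependsOn f T)
    (y : Fin d → Ω) : ∑ x, ν x * f x * condMeasure ν T x y = ν y * f y := by
  have hterm : ∀ x, ν x * f x * condMeasure ν T x y
      = (if ∀ i ∈ T, x i = y i then ν x else 0) * (f y * ν y / linkMass ν T y) := by
    intro x
    rw [condMeasure_apply]
    by_cases hxy : ∀ i ∈ T, x i = y i
    · have hyx : ∀ i ∈ T, y i = x i := fun i hi => (hxy i hi).symm
      rw [if_pos hyx, if_pos hxy, hf hxy, linkMass_congr hxy]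
      ring
    · have hyx : ¬∀ i ∈ T, y i = x i := fun h => hxy fun i hi => (h i hi).symm
      rw [if_neg hyx, if_neg hxy]
      ring
  rw [Finset.sum_congr rfl fun x _ => hterm x, ← Finset.sum_mul]
  change linkMass ν T y * (f y * ν y / linkMass ν T y) = ν y * f y
  by_cases hL : linkMass ν T y = 0
  · rw [hL, eq_zero_of_linkMass_eq_zero hν hL fun _ _ => rfl]
    ring
  · field_simp

lemma expect_mul_projE (hν : ∀ x, 0 ≤ ν x) {f : (Fin d → Ω) → ℝ} (hf : DependsOn f T)
    (g : (Fin d → Ω) → ℝ) :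
    expect ν (fun x => f x * projE ν T g x) = expect ν (fun x => f x * g x) := by
  simp only [_root_.expect, projE_eq_expect_condMeasure, Finset.mul_sum]
  rw [Finset.sum_comm]
  refine Finset.sum_congr rfl fun y _ => ?_
  rw [← mul_assoc, ← sum_mul_condMeasure hν hf y, Finset.sum_mul]
  exact Finset.sum_congr rfl fun x _ => by ring

lemma expect_projE (hν : ∀ x, 0 ≤ ν x) (g : (Fin d → Ω) → ℝ) :
    expect ν (projE ν T g) = expect ν g := by
  simpa using expect_mul_projE hν (f := fun _ => 1) (fun _ _ _ => rfl) g

/-- Both sides equal `E[g f] - E[g] E[f]`. -/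
lemma expect_mul_projE_sub_expect_comm (hν : ∀ x, 0 ≤ ν x) {f g : (Fin d → Ω) → ℝ}
    (hf : DependsOn f S) (hg : DependsOn g T) :
    expect ν (fun x => g x * (projE ν T f x - expect ν f))
      = expect ν (fun x => (projE ν S g x - expect ν g) * f x) := by
  have hcentre : ∀ (a b : (Fin d → Ω) → ℝ) (c : ℝ), expect ν (fun x => a x * (b x - c))
      = expect ν (fun x => a x * b x) - c * expect ν a := fun a b c => by
    simp only [_root_.expect, Finset.mul_sum, ← Finset.sum_sub_distrib]
    exact Finset.sum_congr rfl fun x _ => by ring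
  rw [hcentre, expect_mul_projE hν hg, funext fun x => mul_comm (projE ν S g x - expect ν g) (f x),
    hcentre, expect_mul_projE hν hf, funext fun x => mul_comm (g x) (f x)]
  ring

lemma pnorm_rpow_eq_sum_condMeasure (hν : ∀ x, 0 ≤ ν x) {r : ℝ} (hr : r ≠ 0)
    (T : Finset (Fin d)) (g : (Fin d → Ω) → ℝ) :
    pnorm ν r g ^ r = ∑ x, ν x * pnorm (condMeasure ν T x) r g ^ r := by
  have := expect_projE hν (T := T) (fun y => |g y| ^ r)
  simp only [_root_.expect, projE_eq_expect_condMeasure] at this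
  simp only [pnorm_rpow hν hr, pnorm_rpow (condMeasure_nonneg hν T _) hr, this]

/-- `‖g‖_r ^ r` is the `ν`-average over `x` of the `r`-th powers of the norms in the links of
`x_T`. -/
lemma pnorm_le_of_forall_condMeasure (hν : ∀ x, 0 ≤ ν x) {r K : ℝ} (hr : 0 < r) (hK : 0 ≤ K)
    {f g : (Fin d → Ω) → ℝ}
    (H : ∀ x, pnorm (condMeasure ν T x) r g ≤ K * pnorm (condMeasure ν T x) r f) :
    pnorm ν r g ≤ K * pnorm ν r f := by
  rw [← Real.rpow_le_rpow_iff (pnorm_nonneg hν r g) (mul_nonneg hK (pnorm_nonneg hν r f)) hr,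
    Real.mul_rpow hK (pnorm_nonneg hν r f), pnorm_rpow_eq_sum_condMeasure hν hr.ne' T,
    pnorm_rpow_eq_sum_condMeasure hν hr.ne' T, Finset.mul_sum]
  refine Finset.sum_le_sum fun x _ => ?_
  have hx := Real.rpow_le_rpow (pnorm_nonneg (condMeasure_nonneg hν T x) r g) (H x) hr.le
  rw [Real.mul_rpow hK (pnorm_nonneg (condMeasure_nonneg hν T x) r f)] at hx
  calc ν x * pnorm (condMeasure ν T x) r g ^ r
      ≤ ν x * (K ^ r * pnorm (condMeasure ν T x) r f ^ r) :=
        mul_le_mul_of_nonneg_left hx (hν x)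
    _ = K ^ r * (ν x * pnorm (condMeasure ν T x) r f ^ r) := by ring

end Tower

section SwapWalk

variable {d : ℕ} {Ω : Type} [Fintype Ω] [DecidableEq Ω] {ν : (Fin d → Ω) → ℝ}
  {S T : Finset (Fin d)} {r C : ℝ}

/-- `‖A_{S,T} - Π_{S,T}‖_{r → r} ≤ C` for the measure `ν`, where `A_{S,T} f = E[f | x_T]` acts on
functions of `x_S`. -/
def SwapBound (ν : (Fin d → Ω) → ℝ) (r : ℝ) (S T : Finset (Fin d)) (C : ℝ) : Prop :=
  ∀ f, DependsOn f S → pnorm ν r (fun x => projE ν T f x - expect ν f) ≤ C * pnorm ν r f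

lemma swapBound_empty_right (hν : ∑ x, ν x = 1) (hr : r ≠ 0) : SwapBound ν r S ∅ 0 := by
  intro f _
  simp [projE_empty hν, pnorm, Real.zero_rpow hr, Real.zero_rpow (inv_ne_zero hr)]

lemma swapBound_zero_measure (hr : r ≠ 0) : SwapBound (fun _ : Fin d → Ω => 0) r S T C := by
  intro f _
  simp [pnorm_zero_measure hr]

lemma SwapBound.dual (hν : ∀ x, 0 ≤ ν x) {p p' : ℝ} (hpq : p.HolderConjugate p') (hC : 0 ≤ C)
    (hTS : SwapBound ν p T S C) : SwapBound ν p' S T C := by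
  intro f hf
  set h := fun x => projE ν T f x - expect ν f
  have hh : DependsOn h T := fun x y hxy => by simp only [h, dependsOn_projE ν T f hxy]
  set g := holderDual p' h
  have hg : DependsOn g T := fun x y hxy => by simp only [g, holderDual, hh hxy]
  refine pnorm_le_of_expect_holderDual_mul_le hν hpq (mul_nonneg hC (pnorm_nonneg hν p' f)) ?_
  calc expect ν (fun x => g x * h x)
      = expect ν (fun x => (projE ν S g x - expect ν g) * f x) :=
        expect_mul_projE_sub_expect_comm hν hf hg
    _ ≤ pnorm ν p (fun x => projE ν S g x - expect ν g) * pnorm ν p' f :=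
        (le_abs_self _).trans (abs_expect_mul_le hν hpq _ _)
    _ ≤ C * pnorm ν p g * pnorm ν p' f :=
        mul_le_mul_of_nonneg_right (hTS g hg) (pnorm_nonneg hν p' f)
    _ = C * pnorm ν p' f * pnorm ν p g := by ring

lemma SwapBound.insert_right (hν : ∀ x, 0 ≤ ν x) (hr : 1 ≤ r) {j : Fin d} (hj : j ∉ T) {C₁ C₂ : ℝ}
    (hC₂ : 0 ≤ C₂) (hT : SwapBound ν r S T C₁)
    (hlink : ∀ x, SwapBound (condMeasure ν T x) r S {j} C₂) :
    SwapBound ν r S (insert j T) (C₂ + C₁) := by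
  intro f hf
  have hstep : pnorm ν r (fun x => projE ν (insert j T) f x - projE ν T f x)
      ≤ C₂ * pnorm ν r f := by
    refine pnorm_le_of_forall_condMeasure (T := T) hν (by linarith) hC₂ fun x => ?_
    refine (pnorm_congr fun y hy => ?_).trans_le (hlink x f hf)
    rw [projE_insert hν hj, projE_eq_expect_condMeasure ν T f y,
      condMeasure_congr (agree_of_condMeasure_ne_zero hy)]
  calc pnorm ν r (fun x => projE ν (insert j T) f x - expect ν f)
      = pnorm ν r (fun x => (projE ν (insert j T) f x - projE ν T f x)
          + (projE ν T f x - expect ν f)) := by simp only [sub_add_sub_cancel]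
    _ ≤ pnorm ν r (fun x => projE ν (insert j T) f x - projE ν T f x)
          + pnorm ν r (fun x => projE ν T f x - expect ν f) := pnorm_add_le hν hr _ _
    _ ≤ C₂ * pnorm ν r f + C₁ * pnorm ν r f := add_le_add hstep (hT f hf)
    _ = (C₂ + C₁) * pnorm ν r f := by ring

end SwapWalk

section LinkSwapBound

variable {d : ℕ} {Ω : Type} [Fintype Ω] [DecidableEq Ω] {μ : (Fin d → Ω) → ℝ}
  {S T : Finset (Fin d)} {r C : ℝ}

def LinkSwapBound (μ : (Fin d → Ω) → ℝ) (r : ℝ) (S T : Finset (Fin d)) (C : ℝ) : Prop :=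
  ∀ R z, Disjoint R S → Disjoint R T → SwapBound (condMeasure μ R z) r S T C

lemma linkSwapBound_empty_right (hr : r ≠ 0) : LinkSwapBound μ r S ∅ 0 := by
  intro R z _ _
  by_cases hZ : linkMass μ R z = 0
  · rw [condMeasure_of_linkMass_eq_zero hZ]
    exact swapBound_zero_measure hr
  · exact swapBound_empty_right (sum_condMeasure hZ) hr

lemma LinkSwapBound.dual (hμ : ∀ x, 0 ≤ μ x) {p p' : ℝ} (hpq : p.HolderConjugate p')
    (hC : 0 ≤ C) (hTS : LinkSwapBound μ p T S C) : LinkSwapBound μ p' S T C :=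
  fun R z hRS hRT => (hTS R z hRT hRS).dual (condMeasure_nonneg hμ R z) hpq hC

lemma LinkSwapBound.insert_right (hμ : ∀ x, 0 ≤ μ x) (hr : 1 ≤ r) (hST : Disjoint S T) {j : Fin d}
    (hj : j ∉ T) {C₁ C₂ : ℝ} (hC₂ : 0 ≤ C₂) (hT : LinkSwapBound μ r S T C₁)
    (hSj : LinkSwapBound μ r S {j} C₂) : LinkSwapBound μ r S (insert j T) (C₂ + C₁) := by
  intro R z hRS hRjT
  have hRT : Disjoint R T := Finset.disjoint_of_subset_right (Finset.subset_insert j T) hRjT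
  have hjR : j ∉ R := fun h => Finset.disjoint_left.1 hRjT h (Finset.mem_insert_self j T)
  refine (hT R z hRS hRT).insert_right (condMeasure_nonneg hμ R z) hr hj hC₂ fun x => ?_
  rw [condMeasure_condMeasure hμ hRT]
  exact hSj (R ∪ T) _ (Finset.disjoint_union_left.2 ⟨hRS, hST.symm⟩)
    (Finset.disjoint_union_left.2
      ⟨Finset.disjoint_singleton_right.2 hjR, Finset.disjoint_singleton_right.2 hj⟩)

lemma linkSwapBound_of_forall_singleton (hμ : ∀ x, 0 ≤ μ x) (hr : 1 ≤ r) {c : ℝ} (hc : 0 ≤ c)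
    (H : ∀ j ∉ S, LinkSwapBound μ r S {j} c) (hST : Disjoint S T) :
    LinkSwapBound μ r S T (T.card * c) := by
  induction T using Finset.induction_on with
  | empty => simpa using linkSwapBound_empty_right (by linarith)
  | insert j T hj ih =>
    have hST' : Disjoint S T := Finset.disjoint_of_subset_right (Finset.subset_insert j T) hST
    have := (ih hST').insert_right hμ hr hST' hj hc
      (H j (Finset.disjoint_right.1 hST (Finset.mem_insert_self j T)))
    rwa [Finset.card_insert_of_notMem hj, Nat.cast_succ, add_mul, one_mul, add_comm]

lemma linkSwapBound_of_pairs (hμ : ∀ x, 0 ≤ μ x) {p p' γ : ℝ} (hpq : p.HolderConjugate p')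
    (hγ : 0 ≤ γ) (H : ∀ i j, i ≠ j → LinkSwapBound μ p {i} {j} γ) (hST : Disjoint S T) :
    LinkSwapBound μ p' S T (S.card * T.card * γ) := by
  have hS : ∀ j ∉ S, LinkSwapBound μ p' S {j} (S.card * γ) := fun j hj =>
    (linkSwapBound_of_forall_singleton hμ hpq.lt.le hγ
      (fun i hi => H j i fun hji => hi (Finset.mem_singleton.2 hji.symm))
      (Finset.disjoint_singleton_left.2 hj)).dual hμ hpq (by positivity)
  convert linkSwapBound_of_forall_singleton hμ hpq.symm.lt.le (by positivity) hS hST using 1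
  ring

lemma IsQGammaProduct.linkSwapBound {q γ : ℝ} (hX : IsQGammaProduct μ q γ) {i j : Fin d}
    (hij : i ≠ j) : LinkSwapBound μ q {i} {j} γ := by
  intro R z hRi hRj f hf
  have hiR : i ∉ R := Finset.disjoint_singleton_right.1 hRi
  have hjR : j ∉ R := Finset.disjoint_singleton_right.1 hRj
  have hcard : R.card + 2 ≤ d := by
    have := Finset.card_le_univ (insert i (insert j R))
    rw [Finset.card_insert_of_notMem (by simp [hiR, hij]), Finset.card_insert_of_notMem hjR,
      Fintype.card_fin] at this
    omega
  exact hX R z hcard i j hiR hjR hij f fun x y hxy =>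
    hf fun k hk => (Finset.mem_singleton.1 hk) ▸ hxy

lemma LinkSwapBound.swapBound (hμ : ∑ x, μ x = 1) (h : LinkSwapBound μ r S T C) :
    SwapBound μ r S T C := by
  obtain ⟨z⟩ : Nonempty (Fin d → Ω) := by
    by_contra hempty
    simp_all
  simpa [condMeasure_empty hμ] using
    h ∅ z (Finset.disjoint_empty_left S) (Finset.disjoint_empty_left T)

end LinkSwapBound

/-- `q`-norm expansion of swap walks. If `X` is a `(q,γ)`-product
then for disjoint `S, T ⊆ [d]` the swap walk `A_{S,T}` (acting on functions of
the `S`-coordinates, `A_{S,T} f = E[f | x_T]`) satisfies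
`‖A_{S,T} − Π_{S,T}‖_{q→q} ≤ |S||T|γ` and `‖A_{S,T} − Π_{S,T}‖_{q'→q'} ≤ |S||T|γ`,
`q' = q/(q−1)`. -/
theorem swap_walk_expansion {d : ℕ} {Ω : Type} [Fintype Ω] [DecidableEq Ω]
    (μ : (Fin d → Ω) → ℝ) (hμ0 : ∀ x, 0 ≤ μ x) (hμ1 : ∑ x, μ x = 1)
    (q γ : ℝ) (hq : 1 < q) (hγ : 0 ≤ γ) (hX : IsQGammaProduct μ q γ)
    (S T : Finset (Fin d)) (hST : Disjoint S T)
    (f : (Fin d → Ω) → ℝ) (hf : ∀ x y, (∀ i ∈ S, x i = y i) → f x = f y) :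
    pnorm μ q (fun x => projE μ T f x - expect μ f)
        ≤ (S.card : ℝ) * T.card * γ * pnorm μ q f
    ∧ pnorm μ (q / (q - 1)) (fun x => projE μ T f x - expect μ f)
        ≤ (S.card : ℝ) * T.card * γ * pnorm μ (q / (q - 1)) f := by
  have hpq : q.HolderConjugate (q / (q - 1)) := .conjExponent hq
  have hpairs : ∀ i j, i ≠ j → LinkSwapBound μ q {i} {j} γ := fun _ _ hij =>
    hX.linkSwapBound hij
  have hpairs' : ∀ i j, i ≠ j → LinkSwapBound μ (q / (q - 1)) {i} {j} γ := fun _ _ hij =>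
    (hX.linkSwapBound hij.symm).dual hμ0 hpq hγ
  have hfS : DependsOn f S := fun x y hxy => hf x y hxy
  exact ⟨(linkSwapBound_of_pairs hμ0 hpq.symm hγ hpairs' hST).swapBound hμ1 f hfS,
    (linkSwapBound_of_pairs hμ0 hpq hγ hpairs hST).swapBound hμ1 f hfS⟩
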